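/- Let ν = (n₁,…,n_k) be a tuple of positive integers and let ℓ be an integer with ℓ ≥ (1/2)·max{n₁+1,…,n_k+1,k} and 2ℓ ≥ k+1. Consider the simple graph G on the vertex set {1,…,2ℓk} in which distinct vertices i and j are adjacent exactly when (B_{ν,ℓ})_{ij} = 0. Then every cycle in G has length 3; in particular, the vertex set of every simple closed path in G spans a clique of G. -/

import Mathlib

/-!
Only the zero pattern of `B` matters. Write an index as `2ℓt + r` (block `t`, offset `r < 2ℓ`).
Since `k ≤ 2ℓ - 1`, the column `t - 1` copied into `C` lies in block `0` before the last two
offsets, so its only zero is at row `t - 1`: index `t - 1` is joined to all of block `t`. Inside a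
block, `S` has no off-diagonal zero and `v` can only vanish at offset `2ℓ - 2`. Hence the zero
graph embeds into `hubGraph (2ℓ - 2)` via `x ↦ (x / 2ℓ, x % 2ℓ)`.

In `hubGraph p`, `label` is constant along edges, and a vertex with two distinct neighbours lies in
`triangle p (label x)`. Every vertex of a cycle has two neighbours on it, so a cycle lies inside a
single triangle and has length at most `3`; a closed walk of length `3` spans a clique.
-/

open Matrix

/-- Entry of the antisymmetric matrix `S_N` whose entries above the diagonal are all `1`
(indices are 0-based naturals). -/
def SmatE (p q : ℕ) : ℤ := if p < q then 1 else if q < p then -1 else 0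

/-- The vector `v_{n,ℓ} ∈ ℤ^{2ℓ-1}` (0-based index `p`). -/
def vvecE (n ℓ p : ℕ) : ℤ :=
  if p < n then (-1) ^ p
  else if p = 2 * ℓ - 2 ∧ Even n then 0
  else 1

/-- Entry of the 2ℓ×2ℓ block matrix `A_{n,ℓ} = [[S_{2ℓ-1}, v_{n,ℓ}], [-v_{n,ℓ}ᵀ, 0]]`
(0-based indices). -/
def AmatE (n ℓ p q : ℕ) : ℤ :=
  if p < 2 * ℓ - 1 then
    (if q < 2 * ℓ - 1 then SmatE p q else vvecE n ℓ p)
  else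
    (if q < 2 * ℓ - 1 then -(vvecE n ℓ q) else 0)

/-- The antisymmetric 2ℓ×2ℓ integer matrix `A_{n,ℓ}`. -/
def Amat (n ℓ : ℕ) : Matrix (Fin (2 * ℓ)) (Fin (2 * ℓ)) ℤ :=
  Matrix.of fun i j => AmatE n ℓ (i : ℕ) (j : ℕ)

/-- The antisymmetric `2ℓk × 2ℓk` matrix `B_{ν,ℓ}` for `ν = (ν 0, …, ν (k-1))`, defined
inductively: `B` for `k = 1` is `A_{ν 0, ℓ}`, and `B` for `k+1` is the block matrix
`[[B_k, C],[-Cᵀ, A_{ν k, ℓ}]]` where each column of `C` equals the `k`-th column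
(1-based; 0-based index `k-1`) of `B_k`. -/
def Bmat (ℓ : ℕ) (ν : ℕ → ℕ) : (k : ℕ) → Matrix (Fin (2 * ℓ * k)) (Fin (2 * ℓ * k)) ℤ
  | 0 => 0
  | k + 1 =>
    let B := Bmat ℓ ν k
    let C : Matrix (Fin (2 * ℓ * k)) (Fin (2 * ℓ)) ℤ :=
      Matrix.of fun i _ => if h : k - 1 < 2 * ℓ * k then B i ⟨k - 1, h⟩ else 0
    Matrix.reindex (finSumFinEquiv.trans (finCongr (by ring)))
      (finSumFinEquiv.trans (finCongr (by ring)))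
      (Matrix.fromBlocks B C (-Cᵀ) (Amat (ν k) ℓ))


namespace SimpleGraph.Walk

variable {V : Type*} {G : SimpleGraph V}

lemma apply_eq_of_forall_adj {α : Type*} {f : V → α} (hf : ∀ x y, G.Adj x y → f x = f y)
    {u v : V} (w : G.Walk u v) {x : V} (hx : x ∈ w.support) : f x = f u :=
  w.isChain_adj_support.induction (f · = f u) _ (fun x y hxy h => hf x y hxy ▸ h)
    (fun _ => by rw [head_support]) x hx

lemma IsCycle.neighborSet_nontrivial {u : V} {w : G.Walk u u} (hw : w.IsCycle) {x : V}
    (hx : x ∈ w.support) : (G.neighborSet x).Nontrivial := by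
  obtain ⟨y, z, hyz, h⟩ := Set.ncard_eq_two.mp (hw.ncard_neighborSet_toSubgraph_eq_two hx)
  exact (Set.nontrivial_pair hyz).mono (h ▸ w.toSubgraph.neighborSet_subset x)

lemma IsCycle.length_le_card {u : V} {w : G.Walk u u} (hw : w.IsCycle) {s : Finset V}
    (hs : ∀ x ∈ w.support, x ∈ s) : w.length ≤ s.card := by
  have := (hw.support_nodup.subperm fun x hx =>
    Finset.mem_toList.mpr (hs x (List.mem_of_mem_tail hx))).length_le
  simpa using this

lemma isClique_support_of_length_eq_three {u : V} (w : G.Walk u u) (hw : w.length = 3) :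
    G.IsClique {x | x ∈ w.support} := by
  rcases w with _ | ⟨hab, _ | ⟨hbc, _ | ⟨hca, _ | ⟨_, w⟩⟩⟩⟩ <;>
    simp only [length_cons, length_nil] at hw <;> try omega
  intro x hx y hy hxy
  simp only [support_cons, support_nil, Set.mem_ofPred_eq, List.mem_cons, List.not_mem_nil,
    or_false] at hx hy
  rcases hx with rfl | rfl | rfl | rfl <;> rcases hy with rfl | rfl | rfl | rfl <;>
    first | exact absurd rfl hxy | assumption | exact Adj.symm ‹_›

end SimpleGraph.Walk

def hubGraph (p : ℕ) : SimpleGraph (ℕ × ℕ) :=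
  SimpleGraph.fromRel fun a b =>
    (a.1 = 0 ∧ a.2 < p ∧ b.1 = a.2 + 1) ∨ (a.1 = b.1 ∧ a.2 = p ∧ b.2 = p + 1)

namespace hubGraph

def label (p : ℕ) (x : ℕ × ℕ) : ℕ := if x.1 = 0 ∧ x.2 < p then x.2 + 1 else x.1

def triangle (p t : ℕ) : Finset (ℕ × ℕ) := {(0, t - 1), (t, p), (t, p + 1)}

variable {p : ℕ}

lemma label_eq_of_adj {x y : ℕ × ℕ} (h : (hubGraph p).Adj x y) : label p x = label p y := by
  obtain ⟨x1, x2⟩ := x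
  obtain ⟨y1, y2⟩ := y
  simp only [hubGraph, SimpleGraph.fromRel_adj, label] at h ⊢
  split_ifs <;> omega

lemma mem_triangle_label {x : ℕ × ℕ} (h : ((hubGraph p).neighborSet x).Nontrivial) :
    x ∈ triangle p (label p x) := by
  obtain ⟨⟨y1, y2⟩, hy, ⟨z1, z2⟩, hz, hyz⟩ := h
  obtain ⟨x1, x2⟩ := x
  simp only [SimpleGraph.mem_neighborSet, hubGraph, SimpleGraph.fromRel_adj, ne_eq,
    Prod.mk.injEq] at hy hz hyz
  simp only [triangle, label, Finset.mem_insert, Finset.mem_singleton, Prod.mk.injEq]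
  split_ifs <;> omega

lemma length_le_three_of_isCycle {u : ℕ × ℕ} {w : (hubGraph p).Walk u u} (hw : w.IsCycle) :
    w.length ≤ 3 := by
  have hsub : ∀ x ∈ w.support, x ∈ triangle p (label p u) := fun x hx =>
    w.apply_eq_of_forall_adj (fun _ _ => label_eq_of_adj) hx ▸
      mem_triangle_label (hw.neighborSet_nontrivial hx)
  exact (hw.length_le_card hsub).trans Finset.card_le_three

end hubGraph

lemma AmatE_ne_zero {n ℓ p m : ℕ} (hm : m < 2 * ℓ - 2) (hp : p < 2 * ℓ) (hpm : p ≠ m) :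
    AmatE n ℓ p m ≠ 0 := by
  simp only [AmatE, SmatE, vvecE]
  split_ifs <;> simp_all <;> omega

lemma AmatE_eq_zero {n ℓ r q : ℕ} (hr : r < 2 * ℓ) (hq : q < 2 * ℓ) (hrq : r ≠ q)
    (h : AmatE n ℓ r q = 0) :
    r = 2 * ℓ - 2 ∧ q = 2 * ℓ - 1 ∨ r = 2 * ℓ - 1 ∧ q = 2 * ℓ - 2 := by
  simp only [AmatE, SmatE, vvecE] at h
  split_ifs at h <;> simp_all <;> omega

/-- `Bmat` with natural-number indices. The guard `k - 1 < 2ℓk` of `Bmat` is dropped: it holds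
whenever an entry of `C` is read. -/
def Bentry (ℓ : ℕ) (ν : ℕ → ℕ) : ℕ → ℕ → ℕ → ℤ
  | 0, _, _ => 0
  | k + 1, i, j =>
    if i < 2 * ℓ * k then
      if j < 2 * ℓ * k then Bentry ℓ ν k i j else Bentry ℓ ν k i (k - 1)
    else if j < 2 * ℓ * k then -Bentry ℓ ν k j (k - 1)
    else AmatE (ν k) ℓ (i - 2 * ℓ * k) (j - 2 * ℓ * k)

lemma finSumFinEquiv_symm_apply_eq_dite {m n : ℕ} (x : Fin (m + n)) :
    finSumFinEquiv.symm x =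
      if h : (x : ℕ) < m then Sum.inl ⟨x, h⟩ else Sum.inr ⟨x - m, by omega⟩ := by
  split_ifs with h <;> rw [Equiv.symm_apply_eq] <;> ext <;> simp
  omega

lemma Bmat_apply (ℓ : ℕ) (ν : ℕ → ℕ) (k : ℕ) (i j : Fin (2 * ℓ * k)) :
    Bmat ℓ ν k i j = Bentry ℓ ν k i j := by
  induction k with
  | zero => exact absurd i.2 (by simp)
  | succ k ih =>
    have hk : 0 < 2 * ℓ * k → k - 1 < 2 * ℓ * k := fun h => by
      have : k ≤ 2 * ℓ * k := Nat.le_mul_of_pos_left k (Nat.pos_of_mul_pos_right h)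
      omega
    simp only [Bmat, reindex_apply, submatrix_apply, Equiv.symm_trans_apply, finCongr_symm,
      finCongr_apply, finSumFinEquiv_symm_apply_eq_dite, Fin.val_cast, Bentry]
    by_cases hi : (i : ℕ) < 2 * ℓ * k <;> by_cases hj : (j : ℕ) < 2 * ℓ * k <;>
      simp [hi, hj, ih, Amat, fromBlocks_apply₁₁, fromBlocks_apply₁₂, fromBlocks_apply₂₁,
        fromBlocks_apply₂₂] <;>
      intro h <;> have := hk (by omega) <;> omega

section Bentry

variable {ℓ : ℕ} {ν : ℕ → ℕ}

lemma block_index_lt {k t r : ℕ} (ht : t < k) (hr : r < 2 * ℓ) : 2 * ℓ * t + r < 2 * ℓ * k :=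
  (Nat.mul_add_lt_mul_of_lt_of_lt ht hr).trans_eq (Nat.mul_comm _ _)

lemma Bentry_of_le {k k' i j : ℕ} (hk : k' ≤ k) (hi : i < 2 * ℓ * k') (hj : j < 2 * ℓ * k') :
    Bentry ℓ ν k i j = Bentry ℓ ν k' i j := by
  induction k, hk using Nat.le_induction with
  | base => rfl
  | succ k hk ih =>
    have : 2 * ℓ * k' ≤ 2 * ℓ * k := Nat.mul_le_mul_left _ hk
    rw [Bentry, if_pos (by omega), if_pos (by omega), ih]

lemma Bentry_block_diag {k t r q : ℕ} (ht : t < k) (hr : r < 2 * ℓ) (hq : q < 2 * ℓ) :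
    Bentry ℓ ν k (2 * ℓ * t + r) (2 * ℓ * t + q) = AmatE (ν t) ℓ r q := by
  rw [Bentry_of_le ht (block_index_lt t.lt_succ_self hr) (block_index_lt t.lt_succ_self hq)]
  simp [Bentry]

lemma Bentry_block_upper {k s t r q : ℕ} (hst : s < t) (ht : t < k) (hr : r < 2 * ℓ)
    (hq : q < 2 * ℓ) :
    Bentry ℓ ν k (2 * ℓ * s + r) (2 * ℓ * t + q) = Bentry ℓ ν t (2 * ℓ * s + r) (t - 1) := by
  rw [Bentry_of_le ht (block_index_lt (by omega) hr) (block_index_lt t.lt_succ_self hq), Bentry,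
    if_pos (block_index_lt hst hr), if_neg (by omega)]

lemma Bentry_block_lower {k s t r q : ℕ} (hst : s < t) (ht : t < k) (hr : r < 2 * ℓ)
    (hq : q < 2 * ℓ) :
    Bentry ℓ ν k (2 * ℓ * t + q) (2 * ℓ * s + r) = -Bentry ℓ ν t (2 * ℓ * s + r) (t - 1) := by
  rw [Bentry_of_le ht (block_index_lt t.lt_succ_self hq) (block_index_lt (by omega) hr), Bentry,
    if_neg (by omega), if_pos (block_index_lt hst hr)]

/-- Column `t - 1` of `B` at level `t` (the column copied into `C`) vanishes only on the
diagonal. -/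
lemma Bentry_col_eq_zero {s t r : ℕ} (hst : s < t) (ht : t + 1 < 2 * ℓ) (hr : r < 2 * ℓ)
    (h : Bentry ℓ ν t (2 * ℓ * s + r) (t - 1) = 0) : s = 0 ∧ r + 1 = t := by
  rcases Nat.eq_zero_or_pos s with rfl | hs
  · have hA : Bentry ℓ ν t r (t - 1) = AmatE (ν 0) ℓ r (t - 1) := by
      simpa using Bentry_block_diag (ν := ν) hst hr (q := t - 1) (by omega)
    simp only [mul_zero, zero_add, hA] at h
    by_contra hrt
    exact AmatE_ne_zero (by omega) hr (by omega) h
  · have hA : Bentry ℓ ν s (t - 1) (s - 1) = AmatE (ν 0) ℓ (t - 1) (s - 1) := by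
      simpa using Bentry_block_diag (ν := ν) hs (r := t - 1) (q := s - 1) (by omega) (by omega)
    have hB := Bentry_block_lower (ν := ν) hs hst (r := t - 1) (q := r) (by omega) hr
    simp only [mul_zero, zero_add] at hB
    rw [hB, neg_eq_zero, hA] at h
    exact absurd h (AmatE_ne_zero (by omega) (by omega) (by omega))

end Bentry

def blockCoord (ℓ x : ℕ) : ℕ × ℕ := (x / (2 * ℓ), x % (2 * ℓ))

lemma blockCoord_injective (ℓ : ℕ) : Function.Injective (blockCoord ℓ) := fun x y h => by
  rw [← Nat.div_add_mod x (2 * ℓ), ← Nat.div_add_mod y (2 * ℓ)]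
  simp_all [blockCoord]

lemma blockCoord_mul_add {ℓ t r : ℕ} (hr : r < 2 * ℓ) :
    blockCoord ℓ (2 * ℓ * t + r) = (t, r) := by
  simp [blockCoord, Nat.mul_add_div (by omega : 0 < 2 * ℓ), Nat.div_eq_of_lt hr,
    Nat.mod_eq_of_lt hr]

lemma hubGraph_adj_of_Bentry_eq_zero {ℓ k i j : ℕ} {ν : ℕ → ℕ} (hkℓ : k + 1 ≤ 2 * ℓ)
    (hi : i < 2 * ℓ * k) (hj : j < 2 * ℓ * k) (hij : i ≠ j) (h : Bentry ℓ ν k i j = 0) :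
    (hubGraph (2 * ℓ - 2)).Adj (blockCoord ℓ i) (blockCoord ℓ j) := by
  have hblock : ∀ x < 2 * ℓ * k, ∃ t r, t < k ∧ r < 2 * ℓ ∧ 2 * ℓ * t + r = x := fun x hx =>
    ⟨x / (2 * ℓ), x % (2 * ℓ), Nat.div_lt_of_lt_mul hx, Nat.mod_lt _ (by omega),
      Nat.div_add_mod x _⟩
  obtain ⟨s, r, hs, hr, rfl⟩ := hblock i hi
  obtain ⟨t, q, ht, hq, rfl⟩ := hblock j hj
  rw [blockCoord_mul_add hr, blockCoord_mul_add hq]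
  simp only [hubGraph, SimpleGraph.fromRel_adj, ne_eq, Prod.mk.injEq]
  rcases lt_trichotomy s t with hst | rfl | hst
  · rw [Bentry_block_upper hst ht hr hq] at h
    have := Bentry_col_eq_zero hst (by omega) hr h
    omega
  · rw [Bentry_block_diag ht hr hq] at h
    have := AmatE_eq_zero hr hq (by omega) h
    omega
  · rw [Bentry_block_lower hst hs hq hr, neg_eq_zero] at h
    have := Bentry_col_eq_zero hst (by omega) hq h
    omega

def zeroGraphHom (ℓ k : ℕ) (ν : ℕ → ℕ) (hkℓ : k + 1 ≤ 2 * ℓ) :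
    SimpleGraph.fromRel (fun i j : Fin (2 * ℓ * k) => Bmat ℓ ν k i j = 0) →g
      hubGraph (2 * ℓ - 2) where
  toFun x := blockCoord ℓ x
  map_rel' {x y} hxy := by
    obtain ⟨hne, h | h⟩ := hxy
    · rw [Bmat_apply] at h
      exact hubGraph_adj_of_Bentry_eq_zero hkℓ x.2 y.2 (Fin.val_ne_of_ne hne) h
    · rw [Bmat_apply] at h
      exact (hubGraph_adj_of_Bentry_eq_zero hkℓ y.2 x.2 (Fin.val_ne_of_ne hne.symm) h).symm

theorem Bmat_graph_cycles (k ℓ : ℕ) (ν : ℕ → ℕ) (hkℓ : k + 1 ≤ 2 * ℓ) :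
    ∀ (v : Fin (2 * ℓ * k))
      (w : (SimpleGraph.fromRel fun i j => Bmat ℓ ν k i j = 0).Walk v v),
      w.IsCycle →
        w.length = 3 ∧
        (SimpleGraph.fromRel fun i j => Bmat ℓ ν k i j = 0).IsClique
          {x | x ∈ w.support} := by
  intro v w hw
  have hinj : Function.Injective (zeroGraphHom ℓ k ν hkℓ) :=
    (blockCoord_injective ℓ).comp Fin.val_injective
  have hlen : w.length = 3 := le_antisymm
    (by simpa using hubGraph.length_le_three_of_isCycle (hw.map hinj)) hw.three_le_length
  exact ⟨hlen, w.isClique_support_of_length_eq_three hlen⟩
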